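/- Fix nonnegative integers m, b, k with m > b. The number of words of length 2m-1 over the alphabet {A, L, T} having exactly k occurrences of A, m+b-k occurrences of L, m-b-1 occurrences of T, and containing no occurrence of the consecutive pattern TL, equals binom(m+b, k) * binom(m-b-1+k, k). -/

import Mathlib

/-- The three-letter alphabet {A, L, T}. -/
inductive ALT : Type
  | A | L | T
deriving DecidableEq

open ALT

/-!
Let `F(a, l, t)` count the TL-free words with `a` letters A, `l` letters L and `t` letters T, and
`G(a, l, t)` those among them not starting with L. Stripping a leading run of L's gives
`F(a, l, t) = ∑_{i ≤ l} G(a, i, t)`. A word counted by `G(a + 1, l, t)` is a run of T's, then an A,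
then an arbitrary TL-free word, so `G(a + 1, l, t) = ∑_{j ≤ t} F(a, l, j)`; and `G(0, l, t)` counts
only the word `T^t`. Hence `F(0, l, t) = 1`, `F(a + 1, ·, ·)` is a double prefix sum of
`F(a, ·, ·)`, and the hockey-stick identity gives `F(a, l, t) = C(l + a, a) * C(t + a, a)`.
-/

theorem ncard_eq_ncard_cons_add_ncard_head_ne {α : Type*} {S : Set (List α)} (hS : S.Finite)
    (x : α) : S.ncard = {u | x :: u ∈ S}.ncard + {w ∈ S | w.head? ≠ some x}.ncard := by
  have hsplit : S = (x :: ·) '' {u | x :: u ∈ S} ∪ {w ∈ S | w.head? ≠ some x} := by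
    ext w
    rcases w with _ | ⟨y, u⟩
    · simp
    · by_cases hy : y = x
      · subst hy; simp
      · simp [hy, Ne.symm hy]
  have hdisj : Disjoint ((x :: ·) '' {u | x :: u ∈ S}) {w ∈ S | w.head? ≠ some x} :=
    Set.disjoint_left.2 fun _ ⟨_, _, hu⟩ hw => hw.2 (by simp [← hu])
  conv_lhs => rw [hsplit]
  rw [Set.ncard_union_eq hdisj ((hS.preimage List.cons_injective.injOn).image _)
    (hS.subset (Set.sep_subset _ _)), Set.ncard_image_of_injective _ List.cons_injective]

namespace ALT

instance : Fintype ALT := ⟨{A, L, T}, fun x => by cases x <;> simp⟩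

theorem length_eq_count_add_count_add_count (w : List ALT) :
    w.length = w.count A + w.count L + w.count T := by
  induction w with
  | nil => rfl
  | cons x w ih => cases x <;> simp [ih] <;> omega

def NotTL (x y : ALT) : Prop := ¬(x = T ∧ y = L)

def tlFree (a l t : ℕ) : Set (List ALT) :=
  {w | w.count A = a ∧ w.count L = l ∧ w.count T = t ∧ w.IsChain NotTL}

def tlFreeNoLeadingL (a l t : ℕ) : Set (List ALT) := {w ∈ tlFree a l t | w.head? ≠ some L}

theorem tlFree_finite (a l t : ℕ) : (tlFree a l t).Finite :=
  (List.finite_length_eq ALT (a + l + t)).subset fun w ⟨hA, hL, hT, _⟩ => by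
    show w.length = _
    rw [length_eq_count_add_count_add_count, hA, hL, hT]

theorem isChain_cons_T {u : List ALT} :
    (T :: u).IsChain NotTL ↔ u.IsChain NotTL ∧ u.head? ≠ some L := by
  rcases u with _ | ⟨y, u⟩ <;> simp [List.isChain_cons_cons, NotTL, and_comm]

theorem setOf_cons_L_mem_tlFree (a l t : ℕ) :
    {u | L :: u ∈ tlFree a (l + 1) t} = tlFree a l t := by
  ext u; simp [tlFree, List.isChain_cons, NotTL]

theorem setOf_cons_T_mem_tlFreeNoLeadingL (a l t : ℕ) :
    {u | T :: u ∈ tlFreeNoLeadingL a l (t + 1)} = tlFreeNoLeadingL a l t := by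
  ext u; simp [tlFreeNoLeadingL, tlFree, isChain_cons_T]; tauto

theorem setOf_cons_T_mem_tlFreeNoLeadingL_zero (a l : ℕ) :
    {u | T :: u ∈ tlFreeNoLeadingL a l 0} = ∅ := by
  ext u; simp [tlFreeNoLeadingL, tlFree]

theorem tlFreeNoLeadingL_without_L (a t : ℕ) : tlFreeNoLeadingL a 0 t = tlFree a 0 t := by
  ext (_ | ⟨y, u⟩)
  · simp [tlFreeNoLeadingL]
  · cases y <;> simp [tlFreeNoLeadingL, tlFree]

theorem tlFreeNoLeadingL_succ_filter_head_ne_T (a l t : ℕ) :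
    {w ∈ tlFreeNoLeadingL (a + 1) l t | w.head? ≠ some T} = (A :: ·) '' tlFree a l t := by
  ext (_ | ⟨y, u⟩)
  · simp [tlFreeNoLeadingL, tlFree]
  · cases y <;> simp [tlFreeNoLeadingL, tlFree, List.isChain_cons, NotTL]

theorem eq_replicate_of_count_A_eq_zero {w : List ALT} (hA : w.count A = 0)
    (hw : w.IsChain NotTL) (hL : w.head? ≠ some L) : w = List.replicate (w.count T) T := by
  induction w with
  | nil => rfl
  | cons x u ih =>
    cases x
    · simp at hA
    · simp at hL
    · rw [isChain_cons_T] at hw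
      simp only [List.count_cons_self, List.replicate_succ]
      exact congrArg _ (ih (by simpa using hA) hw.1 hw.2)

theorem mem_tlFreeNoLeadingL_zero {w : List ALT} {l t : ℕ} :
    w ∈ tlFreeNoLeadingL 0 l t ↔ l = 0 ∧ w = List.replicate t T := by
  constructor
  · rintro ⟨⟨hA, hL, hT, hw⟩, hhead⟩
    have := eq_replicate_of_count_A_eq_zero hA hw hhead
    rw [hT] at this
    subst this
    refine ⟨?_, rfl⟩
    simpa [List.count_replicate] using hL.symm
  · rintro ⟨rfl, rfl⟩
    refine ⟨⟨by simp [List.count_replicate], by simp [List.count_replicate], by simp,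
      List.isChain_replicate_of_rel t (by simp [NotTL])⟩, ?_⟩
    cases t <;> simp [List.replicate_succ]

theorem ncard_tlFree_eq_sum (a l t : ℕ) :
    (tlFree a l t).ncard = ∑ i ∈ Finset.range (l + 1), (tlFreeNoLeadingL a i t).ncard := by
  induction l with
  | zero => simp [tlFreeNoLeadingL_without_L]
  | succ l ih =>
    rw [Finset.sum_range_succ, ← ih,
      ncard_eq_ncard_cons_add_ncard_head_ne (tlFree_finite _ _ _) L, setOf_cons_L_mem_tlFree]
    rfl

theorem ncard_tlFreeNoLeadingL_succ_eq_sum (a l t : ℕ) :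
    (tlFreeNoLeadingL (a + 1) l t).ncard = ∑ j ∈ Finset.range (t + 1), (tlFree a l j).ncard := by
  have hsplit (t : ℕ) : (tlFreeNoLeadingL (a + 1) l t).ncard =
      {u | T :: u ∈ tlFreeNoLeadingL (a + 1) l t}.ncard + (tlFree a l t).ncard := by
    rw [ncard_eq_ncard_cons_add_ncard_head_ne (S := tlFreeNoLeadingL (a + 1) l t)
      ((tlFree_finite _ _ _).subset (Set.sep_subset _ _)) T,
      tlFreeNoLeadingL_succ_filter_head_ne_T, Set.ncard_image_of_injective _ List.cons_injective]
  induction t with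
  | zero => simp [hsplit, setOf_cons_T_mem_tlFreeNoLeadingL_zero]
  | succ t ih => rw [hsplit, setOf_cons_T_mem_tlFreeNoLeadingL, ih, Finset.sum_range_succ _ (t + 1)]

theorem ncard_tlFree_zero (l t : ℕ) : (tlFree 0 l t).ncard = 1 := by
  have h0 : tlFreeNoLeadingL 0 0 t = {List.replicate t T} := by
    ext; simp [mem_tlFreeNoLeadingL_zero]
  have hsucc (i : ℕ) : tlFreeNoLeadingL 0 (i + 1) t = ∅ := by
    ext; simp [mem_tlFreeNoLeadingL_zero]
  simp [ncard_tlFree_eq_sum, Finset.sum_range_succ', h0, hsucc]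

theorem ncard_tlFree (a l t : ℕ) :
    (tlFree a l t).ncard = (l + a).choose a * (t + a).choose a := by
  induction a generalizing l t with
  | zero => simp [ncard_tlFree_zero]
  | succ a ih =>
    calc (tlFree (a + 1) l t).ncard
        = ∑ i ∈ Finset.range (l + 1), ∑ j ∈ Finset.range (t + 1),
            (i + a).choose a * (j + a).choose a := by
          simp only [ncard_tlFree_eq_sum, ncard_tlFreeNoLeadingL_succ_eq_sum, ih]
      _ = (l + (a + 1)).choose (a + 1) * (t + (a + 1)).choose (a + 1) := by
          rw [← Finset.sum_mul_sum, Nat.sum_range_add_choose, Nat.sum_range_add_choose]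
          simp only [add_assoc]

end ALT

theorem stmt5 (m b k : ℕ) (hmb : b < m) :
    Nat.card {w : List ALT //
        w.length + 1 = 2 * m ∧
        w.count A = k ∧ w.count L + k = m + b ∧ w.count T + b + 1 = m ∧
        List.Chain' (fun x y => ¬(x = T ∧ y = L)) w} =
      Nat.choose (m + b) k * Nat.choose (m - b - 1 + k) k := by
  rcases le_or_gt k (m + b) with hk | hk
  · rw [Nat.card_congr (Equiv.subtypeEquivRight (q := (· ∈ tlFree k (m + b - k) (m - b - 1)))
      fun w => ?_), Nat.card_coe_set_eq, ncard_tlFree, Nat.sub_add_cancel hk]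
    have := length_eq_count_add_count_add_count w
    exact ⟨fun ⟨_, hA, hL, hT, hw⟩ => ⟨hA, by omega, by omega, hw⟩,
      fun ⟨hA, hL, hT, hw⟩ => ⟨by omega, hA, by omega, by omega, hw⟩⟩
  · rw [Nat.card_eq_zero.2 (.inl ⟨fun ⟨_, _, _, _, _, _⟩ => by omega⟩),
      Nat.choose_eq_zero_of_lt hk, zero_mul]
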